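/- arXiv:0907.4170 — 5 statements merged into one kernel-verified Lean document; each statement's English description precedes it below -/
import Mathlib

section
/- Let N and r be positive integers, let B_1, …, B_r ∈ ℝ^N, and let B be a point of the convex hull of {B_1, …, B_r}. Let m be a positive integer and let c ≥ 0 be a real number. Then there exists a real number α > 0 such that for every linear functional ℓ : ℝ^N → ℝ satisfying ℓ(B_j) ∈ (1/m)ℤ and ℓ(B_j) ≥ −c for all j, the following holds: if ℓ(B) > 0, then ℓ(B) > α. -/
/-!
Write `b = ∑ w j • B j` with `w` in the standard simplex, so that `ℓ b = ∑ w j * x j` with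
`x j = ℓ (B j) ∈ (1/m)ℤ ∩ [-c, ∞)`. All summands `w j * (x j + c)` are nonnegative, so a bound
`ℓ b ≤ 1` bounds each of them; then every `x j` with `w j > 0` ranges over a finite set. Hence the
values `ℓ b ≤ 1` form a finite set, and its positive elements are bounded away from `0`.
-/

lemma finite_grid_inter_Icc {m : ℕ} (hm : 0 < m) (a b : ℝ) :
    ({y : ℝ | ∃ n : ℤ, y = n / m} ∩ Set.Icc a b).Finite := by
  have hm' : (0 : ℝ) < m := by exact_mod_cast hm
  refine ((Set.finite_Icc ⌊a * m⌋ ⌈b * m⌉).image fun n : ℤ => (n : ℝ) / m).subset ?_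
  rintro _ ⟨⟨n, rfl⟩, ha, hb⟩
  refine ⟨n, ⟨?_, ?_⟩, rfl⟩
  · have : a * m ≤ n := (le_div_iff₀ hm').1 ha
    exact Int.cast_le.1 ((Int.floor_le _).trans this)
  · have : (n : ℝ) ≤ b * m := (div_le_iff₀ hm').1 hb
    exact Int.cast_le.1 (this.trans (Int.le_ceil _))

lemma finite_mul_grid_of_mul_add_le {m : ℕ} (hm : 0 < m) {w₀ : ℝ} (hw₀ : 0 ≤ w₀) (c K : ℝ) :
    {t | ∃ y : ℝ, (∃ n : ℤ, y = n / m) ∧ -c ≤ y ∧ w₀ * (y + c) ≤ K ∧ w₀ * y = t}.Finite := by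
  rcases hw₀.eq_or_lt with rfl | hpos
  · refine (Set.finite_singleton 0).subset ?_
    rintro _ ⟨y, -, -, -, rfl⟩
    simp
  · refine ((finite_grid_inter_Icc hm (-c) (K / w₀ - c)).image (w₀ * ·)).subset ?_
    rintro _ ⟨y, hy, hc, hK, rfl⟩
    refine ⟨y, ⟨hy, hc, ?_⟩, rfl⟩
    rw [le_sub_iff_add_le, le_div_iff₀ hpos]
    linarith

section

variable {ι : Type*} [Fintype ι]

def weightedGridSums (w : ι → ℝ) (m : ℕ) (c : ℝ) : Set ℝ :=
  {s | ∃ x : ι → ℝ, (∀ j, (∃ n : ℤ, x j = n / m) ∧ -c ≤ x j) ∧ ∑ j, w j * x j = s}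

lemma mul_add_le_sum_mul_add_mul_sum {w x : ι → ℝ} {c : ℝ} (hw : ∀ k, 0 ≤ w k)
    (hx : ∀ k, -c ≤ x k) (j : ι) :
    w j * (x j + c) ≤ ∑ k, w k * x k + c * ∑ k, w k := by
  calc w j * (x j + c) ≤ ∑ k, w k * (x k + c) :=
        Finset.single_le_sum (f := fun k => w k * (x k + c))
          (fun k _ => mul_nonneg (hw k) (by linarith [hx k])) (Finset.mem_univ j)
    _ = ∑ k, w k * x k + c * ∑ k, w k := by
        rw [Finset.mul_sum, ← Finset.sum_add_distrib]
        simp only [mul_add, mul_comm c]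

lemma finite_weightedGridSums_inter_Iic {w : ι → ℝ} (hw : ∀ j, 0 ≤ w j) {m : ℕ} (hm : 0 < m)
    (c M : ℝ) : (weightedGridSums w m c ∩ Set.Iic M).Finite := by
  set K := M + c * ∑ k, w k
  refine ((Set.Finite.pi fun j => finite_mul_grid_of_mul_add_le hm (hw j) c K).image
    fun t => ∑ j, t j).subset ?_
  rintro _ ⟨⟨x, hx, rfl⟩, hM⟩
  refine ⟨fun j => w j * x j, fun j _ => ⟨x j, (hx j).1, (hx j).2, ?_, rfl⟩, rfl⟩
  have := mul_add_le_sum_mul_add_mul_sum hw (fun k => (hx k).2) j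
  simp only [Set.mem_Iic] at hM
  linarith

end

lemma exists_pos_lt_of_finite_inter_Iic {S : Set ℝ} (hS : (S ∩ Set.Iic 1).Finite) :
    ∃ α > 0, ∀ s ∈ S, 0 < s → α < s := by
  set T := insert 1 (S ∩ Set.Ioc 0 1)
  have hT : T.Finite := (hS.subset fun s hs => ⟨hs.1, hs.2.2⟩).insert 1
  obtain ⟨a, ha, hmin⟩ := Set.exists_min_image T id hT (Set.insert_nonempty _ _)
  have ha_pos : 0 < a := by
    rcases ha with rfl | ⟨-, hpos, -⟩
    exacts [one_pos, hpos]
  refine ⟨a / 2, half_pos ha_pos, fun s hs hpos => ?_⟩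
  rcases le_or_gt s 1 with h1 | h1
  · have : a ≤ s := hmin s (Or.inr ⟨hs, hpos, h1⟩)
    linarith
  · have : a ≤ 1 := hmin 1 (Set.mem_insert _ _)
    linarith

lemma exists_mem_stdSimplex_sum_smul_eq {ι E : Type*} [Fintype ι] [AddCommGroup E] [Module ℝ E]
    {B : ι → E} {b : E} (hb : b ∈ convexHull ℝ (Set.range B)) :
    ∃ w ∈ stdSimplex ℝ ι, ∑ i, w i • B i = b := by
  classical
  have hrange : Set.range B = Fintype.linearCombination ℝ B '' Set.range fun i => Pi.single i 1 := by
    rw [← Set.range_comp]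
    congr 1
    ext i
    simp
  rw [hrange, ← LinearMap.image_convexHull, convexHull_rangle_single_eq_stdSimplex] at hb
  obtain ⟨w, hw, rfl⟩ := hb
  exact ⟨w, hw, (Fintype.linearCombination_apply ℝ B w).symm⟩

theorem stmt_1_general (N r : ℕ)
    (B : Fin r → EuclideanSpace ℝ (Fin N)) (b : EuclideanSpace ℝ (Fin N))
    (hb : b ∈ convexHull ℝ (Set.range B))
    (m : ℕ) (hm : 0 < m) (c : ℝ) :
    ∃ α > (0 : ℝ), ∀ ℓ : EuclideanSpace ℝ (Fin N) →ₗ[ℝ] ℝ,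
      (∀ j, (∃ n : ℤ, ℓ (B j) = (n : ℝ) / m) ∧ -c ≤ ℓ (B j)) →
      0 < ℓ b → α < ℓ b := by
  obtain ⟨w, hw, rfl⟩ := exists_mem_stdSimplex_sum_smul_eq hb
  obtain ⟨α, hα, hα_lt⟩ := exists_pos_lt_of_finite_inter_Iic
    (finite_weightedGridSums_inter_Iic hw.1 hm c 1)
  refine ⟨α, hα, fun ℓ hℓ => hα_lt _ ⟨fun j => ℓ (B j), hℓ, ?_⟩⟩
  simp only [map_sum, map_smul, smul_eq_mul]

/-- Given `B₁, …, B_r ∈ ℝ^N`, a point `b` of their convex hull, a positive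
integer `m` and a real `c ≥ 0`, there is `α > 0` such that every linear functional `ℓ`
with `ℓ (B j) ∈ (1/m)ℤ` and `ℓ (B j) ≥ -c` for all `j` satisfies:
if `ℓ b > 0` then `ℓ b > α`. -/
theorem stmt_1 (N r : ℕ) (hN : 0 < N) (hr : 0 < r)
    (B : Fin r → EuclideanSpace ℝ (Fin N)) (b : EuclideanSpace ℝ (Fin N))
    (hb : b ∈ convexHull ℝ (Set.range B))
    (m : ℕ) (hm : 0 < m) (c : ℝ) (hc : 0 ≤ c) :
    ∃ α > (0 : ℝ), ∀ ℓ : EuclideanSpace ℝ (Fin N) →ₗ[ℝ] ℝ,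
      (∀ j, (∃ n : ℤ, ℓ (B j) = (n : ℝ) / m) ∧ -c ≤ ℓ (B j)) →
      0 < ℓ b → α < ℓ b :=
  stmt_1_general N r B b hb m hm c
end

section
/- Let N and r be positive integers, let B_1, …, B_r ∈ ℝ^N, let L be the convex hull of {B_1, …, B_r}, let B ∈ L, let m be a positive integer, and let c > 0 be a real number. Then there exists δ > 0 such that for every linear functional ℓ : ℝ^N → ℝ satisfying ℓ(B_j) ∈ (1/m)ℤ and ℓ(B_j) ≥ −c for all j, and every point Δ ∈ L with ‖Δ − B‖ < δ, the following holds: if ℓ(Δ) ≤ 0, then ℓ(B) ≤ 0. Here ‖·‖ denotes the Euclidean norm on ℝ^N. -/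
/-!
Write points of the hull as `∑ sⱼ • Bⱼ` with weights `s` in the standard simplex, so that
`ℓ Δ = s ⬝ᵥ v` with `vⱼ = ℓ Bⱼ`. Fix weights `t` of `b`. For weights `s` close to `t` with
`s ⬝ᵥ v ≤ 0`, the lower bound `vⱼ ≥ -c` forces `sⱼ (vⱼ + c) ≤ c`, so `vⱼ` is bounded on the
support of `t`. Truncating `v` from above therefore changes neither `t ⬝ᵥ v` nor the sign of
`s ⬝ᵥ v`, and leaves finitely many vectors, for each of which positivity of `t ⬝ᵥ v` persists
near `t` by continuity. Compactness of the simplex turns "near some weights of `b`" into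
"near `b`".
-/

open Set Filter Topology Matrix

lemma finite_setOf_intCast_div_inter_Icc (m : ℕ) (a b : ℝ) :
    ({x : ℝ | ∃ n : ℤ, x = n / m} ∩ Icc a b).Finite := by
  rcases m.eq_zero_or_pos with rfl | hm
  · refine (finite_singleton 0).subset ?_
    rintro x ⟨⟨n, rfl⟩, -⟩
    simp
  have hm' : (0 : ℝ) < m := Nat.cast_pos.2 hm
  refine ((finite_Icc ⌈a * m⌉ ⌊b * m⌋).image fun n : ℤ => (n : ℝ) / m).subset ?_
  rintro x ⟨⟨n, rfl⟩, hax, hxb⟩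
  refine ⟨n, ⟨Int.ceil_le.2 ?_, Int.le_floor.2 ?_⟩, rfl⟩
  · exact (le_div_iff₀ hm').1 hax
  · exact (div_le_iff₀ hm').1 hxb

lemma IsCompact.eventually_forall_of_eventually_fiber {X Y : Type*} [TopologicalSpace X]
    [TopologicalSpace Y] [T2Space Y] {K : Set X} (hK : IsCompact K) {f : X → Y}
    (hf : ContinuousOn f K) {y : Y} {P : X → Prop}
    (hP : ∀ x ∈ K, f x = y → ∀ᶠ x' in 𝓝[K] x, P x') :
    ∀ᶠ y' in 𝓝 y, ∀ x ∈ K, f x = y' → P x := by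
  set V := {x | ∀ᶠ x' in 𝓝 x, x' ∈ K → P x'}
  have hV : IsOpen V := isOpen_setOfPred_eventually_nhds
  have hclosed : IsClosed (f '' (K \ V)) :=
    ((hK.diff hV).image_of_continuousOn (hf.mono sdiff_subset)).isClosed
  have hy : y ∉ f '' (K \ V) := by
    rintro ⟨x, ⟨hxK, hxV⟩, rfl⟩
    exact hxV (eventually_nhdsWithin_iff.1 (hP x hxK rfl))
  filter_upwards [hclosed.isOpen_compl.mem_nhds hy] with y' hy' x hxK hxy'
  have hxV : x ∈ V := by_contra fun hxV => hy' ⟨x, ⟨hxK, hxV⟩, hxy'⟩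
  exact hxV.self_of_nhds hxK

section Weights

variable {ι : Type*} [Fintype ι]

lemma mul_add_le_of_mem_stdSimplex_of_dotProduct_nonpos {c : ℝ} {s v : ι → ℝ}
    (hs : s ∈ stdSimplex ℝ ι) (hv : ∀ j, -c ≤ v j) (hsv : s ⬝ᵥ v ≤ 0) (j : ι) :
    s j * (v j + c) ≤ c := by
  calc s j * (v j + c) ≤ ∑ k, s k * (v k + c) :=
        Finset.single_le_sum (f := fun k => s k * (v k + c))
          (fun k _ => mul_nonneg (hs.1 k) (by linarith [hv k])) (Finset.mem_univ j)
    _ = s ⬝ᵥ v + c := by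
        simp only [mul_add, Finset.sum_add_distrib, ← Finset.sum_mul, hs.2, one_mul,
          dotProduct]
    _ ≤ c := by linarith

lemma eventually_dotProduct_nonpos_imp {D : Set ℝ} {c : ℝ}
    (hD : ∀ M, (D ∩ Icc (-c) M).Finite) (hc : 0 ≤ c) {t : ι → ℝ} (ht : 0 ≤ t) :
    ∀ᶠ s in 𝓝[stdSimplex ℝ ι] t, ∀ v : ι → ℝ, (∀ j, v j ∈ D ∧ -c ≤ v j) →
      s ⬝ᵥ v ≤ 0 → t ⬝ᵥ v ≤ 0 := by
  obtain ⟨M, hM⟩ : ∃ M, ∀ j, c / (t j / 2) ≤ M :=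
    (Finite.bddAbove_range fun j => c / (t j / 2)).imp fun M hM j => hM ⟨j, rfl⟩
  set F := Set.pi univ fun _ : ι => insert M (D ∩ Icc (-c) M)
  have hF : F.Finite := Set.Finite.pi fun _ => (hD M).insert M
  have h_pos : ∀ᶠ s in 𝓝 t, ∀ u ∈ {u ∈ F | 0 < t ⬝ᵥ u}, 0 < s ⬝ᵥ u :=
    (hF.sep _).eventually_all.2 fun u hu =>
      (continuous_id.dotProduct continuous_const).continuousAt.eventually (lt_mem_nhds hu.2)
  have h_half : ∀ᶠ s in 𝓝 t, ∀ j ∈ {j | 0 < t j}, t j / 2 < s j :=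
    (toFinite _).eventually_all.2 fun j htj =>
      (continuous_apply j).continuousAt.eventually (lt_mem_nhds (half_lt_self htj))
  filter_upwards [nhdsWithin_le_nhds h_pos, nhdsWithin_le_nhds h_half, self_mem_nhdsWithin]
    with s hpos hhalf hs v hv hsv
  have hbound : ∀ j, 0 < t j → v j ≤ M := fun j htj => by
    have hsj : 0 < s j := (half_pos htj).trans (hhalf j htj)
    have := mul_add_le_of_mem_stdSimplex_of_dotProduct_nonpos hs (fun k => (hv k).2) hsv j
    calc v j ≤ v j + c := by linarith
      _ ≤ c / s j := (le_div_iff₀ hsj).2 (by linarith)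
      _ ≤ c / (t j / 2) := div_le_div_of_nonneg_left hc (half_pos htj) (hhalf j htj).le
      _ ≤ M := hM j
  set u : ι → ℝ := fun j => min (v j) M
  have hu : u ∈ F := fun j _ => by
    rcases le_total (v j) M with hvM | hMv
    · simp only [u, min_eq_left hvM]
      exact Or.inr ⟨(hv j).1, (hv j).2, hvM⟩
    · exact Or.inl (min_eq_right hMv)
  have htu : t ⬝ᵥ u = t ⬝ᵥ v := Finset.sum_congr rfl fun j _ => by
    rcases (ht j).eq_or_lt with htj | htj
    · simp [← htj]
    · simp [u, min_eq_left (hbound j htj)]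
  have hsu : s ⬝ᵥ u ≤ s ⬝ᵥ v :=
    dotProduct_le_dotProduct_of_nonneg_left (fun j => min_le_left _ _) hs.1
  by_contra h
  linarith [hpos u ⟨hu, htu ▸ not_le.1 h⟩]

end Weights

section ConvexHull

variable {E : Type*} [AddCommGroup E] [Module ℝ E] {ι : Type*} [Fintype ι]

lemma convexHull_range_eq_image_stdSimplex (B : ι → E) :
    convexHull ℝ (range B) = (fun s : ι → ℝ => ∑ i, s i • B i) '' stdSimplex ℝ ι := by
  classical
  have hlin : (fun s : ι → ℝ => ∑ i, s i • B i) = Fintype.linearCombination ℝ B :=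
    funext fun s => (Fintype.linearCombination_apply ℝ B s).symm
  rw [hlin, ← convexHull_rangle_single_eq_stdSimplex, LinearMap.image_convexHull,
    ← range_comp]
  congr 2
  ext i
  simp [Fintype.linearCombination_apply_single]

variable [TopologicalSpace E] [IsTopologicalAddGroup E] [ContinuousSMul ℝ E] [T2Space E]

theorem eventually_convexHull_apply_nonpos_imp (B : ι → E) (b : E) {D : Set ℝ}
    {c : ℝ} (hD : ∀ M, (D ∩ Icc (-c) M).Finite) (hc : 0 ≤ c) :
    ∀ᶠ Δ in 𝓝 b, Δ ∈ convexHull ℝ (range B) → ∀ ℓ : E →ₗ[ℝ] ℝ,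
      (∀ j, ℓ (B j) ∈ D ∧ -c ≤ ℓ (B j)) → ℓ Δ ≤ 0 → ℓ b ≤ 0 := by
  have hℓ (ℓ : E →ₗ[ℝ] ℝ) (s : ι → ℝ) : ℓ (∑ i, s i • B i) = s ⬝ᵥ (ℓ ∘ B) := by
    simp [dotProduct]
  have hnear := (isCompact_stdSimplex ℝ ι).eventually_forall_of_eventually_fiber
    (f := fun s : ι → ℝ => ∑ i, s i • B i) (by fun_prop)
    (P := fun s => ∀ ℓ : E →ₗ[ℝ] ℝ, (∀ j, ℓ (B j) ∈ D ∧ -c ≤ ℓ (B j)) →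
      ℓ (∑ i, s i • B i) ≤ 0 → ℓ b ≤ 0)
    fun t ht (htb : ∑ i, t i • B i = b) => by
      filter_upwards [eventually_dotProduct_nonpos_imp hD hc ht.1] with s hs ℓ hBℓ
      rw [← htb, hℓ, hℓ]
      exact hs (ℓ ∘ B) hBℓ
  rw [convexHull_range_eq_image_stdSimplex]
  filter_upwards [hnear] with Δ hΔ ⟨s, hs, hsΔ⟩
  simpa only [hsΔ] using hΔ s hs hsΔ

end ConvexHull

theorem stmt_2_general (N r : ℕ)
    (B : Fin r → EuclideanSpace ℝ (Fin N)) (b : EuclideanSpace ℝ (Fin N))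
    (m : ℕ) (c : ℝ) (hc : 0 < c) :
    ∃ δ > (0 : ℝ), ∀ ℓ : EuclideanSpace ℝ (Fin N) →ₗ[ℝ] ℝ,
      (∀ j, (∃ n : ℤ, ℓ (B j) = (n : ℝ) / m) ∧ -c ≤ ℓ (B j)) →
      ∀ Δ ∈ convexHull ℝ (Set.range B), ‖Δ - b‖ < δ →
      ℓ Δ ≤ 0 → ℓ b ≤ 0 := by
  obtain ⟨δ, hδ, hnear⟩ := Metric.eventually_nhds_iff.1
    (eventually_convexHull_apply_nonpos_imp B b
      (finite_setOf_intCast_div_inter_Icc m (-c)) hc.le)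
  exact ⟨δ, hδ, fun ℓ hℓ Δ hΔ hΔb => hnear (by rwa [dist_eq_norm]) hΔ ℓ hℓ⟩

/-- Given `B₁, …, B_r ∈ ℝ^N`, their convex hull `L`, a point `b ∈ L`, a
positive integer `m` and a real `c > 0`, there is `δ > 0` such that for every linear
functional `ℓ` with `ℓ (B j) ∈ (1/m)ℤ` and `ℓ (B j) ≥ -c` for all `j`, and every `Δ ∈ L`
with `‖Δ - b‖ < δ` (Euclidean norm): if `ℓ Δ ≤ 0` then `ℓ b ≤ 0`. -/
theorem stmt_2 (N r : ℕ) (hN : 0 < N) (hr : 0 < r)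
    (B : Fin r → EuclideanSpace ℝ (Fin N)) (b : EuclideanSpace ℝ (Fin N))
    (hb : b ∈ convexHull ℝ (Set.range B))
    (m : ℕ) (hm : 0 < m) (c : ℝ) (hc : 0 < c) :
    ∃ δ > (0 : ℝ), ∀ ℓ : EuclideanSpace ℝ (Fin N) →ₗ[ℝ] ℝ,
      (∀ j, (∃ n : ℤ, ℓ (B j) = (n : ℝ) / m) ∧ -c ≤ ℓ (B j)) →
      ∀ Δ ∈ convexHull ℝ (Set.range B), ‖Δ - b‖ < δ →
      ℓ Δ ≤ 0 → ℓ b ≤ 0 :=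
  stmt_2_general N r B b m c hc
end

section
/- Let N and r be positive integers, let B_1, …, B_r be points of ℝ^N with rational coordinates, let L be the convex hull of {B_1, …, B_r}, let m be a positive integer, and let c > 0 be a real number. Let T be a set of linear functionals ℓ : ℝ^N → ℝ such that for every ℓ ∈ T and every j one has ℓ(B_j) ∈ (1/m)ℤ and ℓ(B_j) ≥ −c. Then the set N_T := { Δ ∈ L : ℓ(Δ) ≥ 0 for all ℓ ∈ T } is a rational polytope, i.e., it is the convex hull of finitely many points of ℝ^N with rational coordinates. -/
/-!
Only finitely many functionals of `T` matter. The vectors `(ℓ (B j))ⱼ` lie in `Dʳ`, where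
`D = (1/m)ℤ ∩ [-c, ∞)` is well-ordered, so by Dickson's lemma they have finitely many minimal
elements; every `ℓ ∈ T` dominates one of the corresponding `ℓ'` at every vertex `B j`, hence on
all of `L`, and `ℓ' ≥ 0` implies `ℓ ≥ 0` there.

Cutting a polytope by one half-space `ℓ ≥ 0` leaves the convex hull of the vertices with
`ℓ ≥ 0` and of the points where the segments joining them to the vertices with `ℓ < 0` cross
`ker ℓ`. These crossing points are rational affine combinations of two vertices as soon as `ℓ`
is rational at both, so the vertices stay rational, and so do the values of the remaining
functionals at them; finitely many cuts give a rational polytope.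
-/

open Set

theorem Set.IsPWO.exists_finite_subset_forall_exists_le {α β : Type*} [PartialOrder β]
    {f : α → β} {T : Set α} (h : (f '' T).IsPWO) :
    ∃ T' ⊆ T, T'.Finite ∧ ∀ a ∈ T, ∃ b ∈ T', f b ≤ f a := by
  set M := {y | Minimal (· ∈ f '' T) y}
  have hM : M.Finite := (setOfPred_minimal_antichain _).finite_of_partiallyWellOrderedOn
    (h.mono (setOfPred_minimal_subset _))
  have hMT : ∀ y : M, ∃ a ∈ T, f a = y := fun y => (setOfPred_minimal_subset (f '' T) y.2 :)
  choose g hgT hgf using hMT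
  have := hM.to_subtype
  refine ⟨range g, range_subset_iff.2 hgT, finite_range g, fun a ha => ?_⟩
  obtain ⟨y, hya, hy⟩ := h.exists_le_minimal (mem_image_of_mem f ha)
  exact ⟨g ⟨y, hy⟩, mem_range_self _, (hgf ⟨y, hy⟩).symm ▸ hya⟩

theorem isPWO_setOf_int_div_and_le (m : ℕ) (hm : 0 < m) (c : ℝ) :
    {x : ℝ | (∃ n : ℤ, x = n / m) ∧ -c ≤ x}.IsPWO := by
  set C := ⌈c * m⌉₊
  have hmono : Monotone fun k : ℕ => ((k : ℝ) - C) / m := fun k k' hk =>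
    div_le_div_of_nonneg_right (by simpa using hk) m.cast_nonneg
  refine ((IsPWO.of_linearOrder univ).image_of_monotone hmono).mono ?_
  rintro x ⟨⟨n, rfl⟩, hx⟩
  have hnC : (0 : ℝ) ≤ n + C := by
    have := Nat.le_ceil (c * m)
    have := (le_div_iff₀ (by exact_mod_cast hm)).1 hx
    linarith
  refine ⟨(n + C).toNat, mem_univ _, ?_⟩
  have : ((n + C).toNat : ℝ) = n + C := by
    exact_mod_cast Int.toNat_of_nonneg (by exact_mod_cast hnC)
  simp [this]

section Convex

variable {E : Type*} [AddCommGroup E] [Module ℝ E]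

theorem Convex.sum_add_sum_mem {ι κ : Type*} {s : Set E} (hs : Convex ℝ s) {t : Finset ι}
    {u : Finset κ} {a : ι → ℝ} {b : κ → ℝ} {x : ι → E} {y : κ → E}
    (ha : ∀ i ∈ t, 0 ≤ a i) (hb : ∀ k ∈ u, 0 ≤ b k) (hab : ∑ i ∈ t, a i + ∑ k ∈ u, b k = 1)
    (hx : ∀ i ∈ t, x i ∈ s) (hy : ∀ k ∈ u, y k ∈ s) :
    ∑ i ∈ t, a i • x i + ∑ k ∈ u, b k • y k ∈ s := by
  simpa using hs.sum_mem (t := t.disjSum u) (w := Sum.elim a b) (z := Sum.elim x y)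
    (by simpa using And.intro ha hb) (by simpa using hab) (by simpa using And.intro hx hy)

theorem LinearMap.apply_le_apply_of_mem_convexHull {ℓ ℓ' : E →ₗ[ℝ] ℝ} {s : Set E}
    (h : ∀ y ∈ s, ℓ' y ≤ ℓ y) {x : E} (hx : x ∈ convexHull ℝ s) : ℓ' x ≤ ℓ x := by
  have hconv : Convex ℝ {y | (ℓ' - ℓ) y ≤ 0} := convex_halfSpace_le (ℓ' - ℓ).isLinear 0
  simpa using convexHull_min (t := {y | (ℓ' - ℓ) y ≤ 0}) (fun y hy => by simpa using h y hy)
    hconv hx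

theorem sep_convexHull_forall_nonneg_eq_of_exists_le {s : Set E} {T T' : Set (E →ₗ[ℝ] ℝ)}
    (hT' : T' ⊆ T) (h : ∀ ℓ ∈ T, ∃ ℓ' ∈ T', ∀ y ∈ s, ℓ' y ≤ ℓ y) :
    {x ∈ convexHull ℝ s | ∀ ℓ ∈ T, 0 ≤ ℓ x} = {x ∈ convexHull ℝ s | ∀ ℓ ∈ T', 0 ≤ ℓ x} := by
  ext x
  refine ⟨fun ⟨hx, hT⟩ => ⟨hx, fun ℓ hℓ => hT ℓ (hT' hℓ)⟩, fun ⟨hx, hT'x⟩ => ⟨hx, fun ℓ hℓ => ?_⟩⟩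
  obtain ⟨ℓ', hℓ', hle⟩ := h ℓ hℓ
  exact (hT'x ℓ' hℓ').trans (LinearMap.apply_le_apply_of_mem_convexHull hle hx)

variable (ℓ : E →ₗ[ℝ] ℝ)

/-- The point of the line through `f` and `g` at which `ℓ` vanishes. -/
noncomputable def cutPoint (f g : E) : E :=
  (ℓ g / (ℓ g - ℓ f)) • f + (1 - ℓ g / (ℓ g - ℓ f)) • g

variable {ℓ}

theorem smul_cutPoint {f g : E} (h : ℓ f ≠ ℓ g) :
    (ℓ f - ℓ g) • cutPoint ℓ f g = (-ℓ g) • f + ℓ f • g := by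
  have : ℓ g - ℓ f ≠ 0 := sub_ne_zero.2 h.symm
  simp only [cutPoint, smul_add, smul_smul]
  congr 2 <;> field_simp <;> ring

theorem map_cutPoint {f g : E} (h : ℓ f ≠ ℓ g) : ℓ (cutPoint ℓ f g) = 0 := by
  have : ℓ g - ℓ f ≠ 0 := sub_ne_zero.2 h.symm
  simp only [cutPoint, map_add, map_smul, smul_eq_mul]
  field_simp
  ring

theorem cutPoint_mem_segment {f g : E} (hf : 0 ≤ ℓ f) (hg : ℓ g < 0) :
    cutPoint ℓ f g ∈ segment ℝ f g := by
  have : ℓ g - ℓ f < 0 := by linarith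
  refine ⟨_, _, div_nonneg_of_nonpos hg.le this.le, ?_, add_sub_cancel _ 1, rfl⟩
  rw [sub_nonneg, div_le_one_of_neg this]
  linarith

theorem sum_sum_smul_neg_smul_add_smul {M : Type*} [AddCommGroup M] [Module ℝ M]
    (P N : Finset E) (α β : E → ℝ) (v : E → M) :
    ∑ f ∈ P, ∑ g ∈ N, (α f * β g) • ((-ℓ g) • v f + ℓ f • v g) =
      (∑ g ∈ N, β g * -ℓ g) • ∑ f ∈ P, α f • v f + (∑ f ∈ P, α f * ℓ f) • ∑ g ∈ N, β g • v g := by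
  simp only [smul_add, Finset.sum_add_distrib, Finset.smul_sum, smul_smul]
  rw [Finset.sum_comm (s := P) (t := N) (f := fun f g => (α f * β g * ℓ f) • v g)]
  congr 1 <;> refine Finset.sum_congr rfl fun _ _ => ?_ <;>
    rw [← Finset.sum_smul, Finset.sum_mul] <;>
    exact congrArg₂ _ (Finset.sum_congr rfl fun _ _ => by ring) rfl

theorem sum_product_div_smul_neg_smul_add_smul {M : Type*} [AddCommGroup M] [Module ℝ M]
    {P N : Finset E} {α β : E → ℝ} (hβ : ∑ f ∈ P, α f * ℓ f = 0 → ∀ g ∈ N, β g = 0)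
    (v : E → M) :
    ∑ p ∈ P ×ˢ N, (α p.1 * β p.2 / ∑ f ∈ P, α f * ℓ f) • ((-ℓ p.2) • v p.1 + ℓ p.1 • v p.2) =
      ((∑ g ∈ N, β g * -ℓ g) / ∑ f ∈ P, α f * ℓ f) • ∑ f ∈ P, α f • v f +
        ∑ g ∈ N, β g • v g := by
  set A := ∑ f ∈ P, α f * ℓ f
  have hAA : A⁻¹ • A • ∑ g ∈ N, β g • v g = ∑ g ∈ N, β g • v g := by
    by_cases hA : A = 0
    · rw [Finset.sum_eq_zero fun g hg => by rw [hβ hA g hg, zero_smul], smul_zero, smul_zero]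
    · rw [inv_smul_smul₀ hA]
  simp_rw [Finset.sum_product, div_eq_inv_mul _ A, mul_smul A⁻¹, ← Finset.smul_sum]
  rw [sum_sum_smul_neg_smul_add_smul, smul_add, hAA]

/-- With `A = ∑ α f ℓ f` and `B = ∑ β g (-ℓ g)`, the point is rewritten with weight
`α f (1 - B / A)` at `f` and `α f β g (ℓ f - ℓ g) / A` at `cutPoint ℓ f g`: each `g` spreads its
weight over the segments `[f, g]` in proportion to `α f ℓ f`. -/
theorem sum_add_sum_mem_convexHull_cutPoint {P N : Finset E} (hP : ∀ f ∈ P, 0 ≤ ℓ f)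
    (hN : ∀ g ∈ N, ℓ g < 0) {α β : E → ℝ} (hα : ∀ f ∈ P, 0 ≤ α f) (hβ : ∀ g ∈ N, 0 ≤ β g)
    (hαβ : ∑ f ∈ P, α f + ∑ g ∈ N, β g = 1)
    (hx : 0 ≤ ℓ (∑ f ∈ P, α f • f + ∑ g ∈ N, β g • g)) :
    ∑ f ∈ P, α f • f + ∑ g ∈ N, β g • g ∈ convexHull ℝ (↑P ∪ image2 (cutPoint ℓ) ↑P ↑N) := by
  set A := ∑ f ∈ P, α f * ℓ f
  set B := ∑ g ∈ N, β g * -ℓ g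
  have hβℓ : ∀ g ∈ N, 0 ≤ β g * -ℓ g := fun g hg => mul_nonneg (hβ g hg) (by linarith [hN g hg])
  have hBA : B ≤ A := by
    simp only [map_add, map_sum, map_smul, smul_eq_mul] at hx
    simp only [B, mul_neg, Finset.sum_neg_distrib]
    linarith
  have hA : 0 ≤ A := (Finset.sum_nonneg hβℓ).trans hBA
  have hβ0 : A = 0 → ∀ g ∈ N, β g = 0 := fun hA0 g hg => by
    have := (Finset.sum_eq_zero_iff_of_nonneg hβℓ).1
      (le_antisymm (hA0 ▸ hBA) (Finset.sum_nonneg hβℓ)) g hg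
    simpa [(hN g hg).ne] using this
  set γ : E × E → ℝ := fun p => α p.1 * β p.2 / A * (ℓ p.1 - ℓ p.2)
  have hγ0 : ∀ p ∈ P ×ˢ N, 0 ≤ γ p := fun p hp => by
    obtain ⟨hf, hg⟩ := Finset.mem_product.1 hp
    exact mul_nonneg (div_nonneg (mul_nonneg (hα _ hf) (hβ _ hg)) hA)
      (by linarith [hP _ hf, hN _ hg])
  have hγ_sum : ∑ p ∈ P ×ˢ N, γ p = B / A * ∑ f ∈ P, α f + ∑ g ∈ N, β g := by
    have := sum_product_div_smul_neg_smul_add_smul hβ0 fun _ => (1 : ℝ)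
    simp only [smul_eq_mul, mul_one] at this
    rw [← this]
    exact Finset.sum_congr rfl fun p _ => by ring
  have hγ_smul : ∑ p ∈ P ×ˢ N, γ p • cutPoint ℓ p.1 p.2 =
      (B / A) • ∑ f ∈ P, α f • f + ∑ g ∈ N, β g • g := by
    refine (Finset.sum_congr rfl fun p hp => ?_).trans
      (sum_product_div_smul_neg_smul_add_smul hβ0 id)
    obtain ⟨hf, hg⟩ := Finset.mem_product.1 hp
    rw [mul_smul, smul_cutPoint (by linarith [hP _ hf, hN _ hg]), id, id]
  have hx_eq : ∑ f ∈ P, α f • f + ∑ g ∈ N, β g • g =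
      ∑ f ∈ P, (α f * (1 - B / A)) • f + ∑ p ∈ P ×ˢ N, γ p • cutPoint ℓ p.1 p.2 := by
    simp only [hγ_smul, mul_sub, mul_one, sub_smul, Finset.sum_sub_distrib, mul_comm _ (B / A),
      mul_smul, ← Finset.smul_sum]
    abel
  rw [hx_eq]
  refine (convex_convexHull ℝ _).sum_add_sum_mem
    (fun f hf => mul_nonneg (hα f hf) (sub_nonneg.2 (div_le_one_of_le₀ hBA hA))) hγ0 ?_
    (fun f hf => subset_convexHull ℝ _ (Or.inl hf)) fun p hp => subset_convexHull ℝ _ (Or.inr ?_)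
  · rw [hγ_sum, ← Finset.sum_mul]
    linear_combination hαβ
  · exact mem_image2_of_mem (Finset.mem_product.1 hp).1 (Finset.mem_product.1 hp).2

theorem convexHull_sep_nonneg_eq (F : Finset E) :
    {x ∈ convexHull ℝ (F : Set E) | 0 ≤ ℓ x} =
      convexHull ℝ ({f ∈ (F : Set E) | 0 ≤ ℓ f} ∪
        image2 (cutPoint ℓ) {f ∈ (F : Set E) | 0 ≤ ℓ f} {g ∈ (F : Set E) | ℓ g < 0}) := by
  classical
  apply Subset.antisymm
  · rintro x ⟨hxF, hx⟩
    obtain ⟨w, hw0, hw1, rfl⟩ := Finset.mem_convexHull'.1 hxF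
    have hneg : {y ∈ F | ¬0 ≤ ℓ y} = {y ∈ F | ℓ y < 0} := Finset.filter_congr fun _ _ => not_le
    rw [← Finset.sum_filter_add_sum_filter_not F (0 ≤ ℓ ·), hneg] at hx hw1 ⊢
    simpa only [Finset.coe_filter, Finset.mem_coe] using sum_add_sum_mem_convexHull_cutPoint
      (fun f hf => (Finset.mem_filter.1 hf).2) (fun g hg => (Finset.mem_filter.1 hg).2)
      (fun f hf => hw0 f (Finset.mem_filter.1 hf).1) (fun g hg => hw0 g (Finset.mem_filter.1 hg).1)
      hw1 hx
  · refine convexHull_min ?_ ((convex_convexHull ℝ _).inter (convex_halfSpace_ge ℓ.isLinear 0))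
    rintro _ (⟨hf, hℓf⟩ | ⟨f, ⟨hf, hℓf⟩, g, ⟨hg, hℓg⟩, rfl⟩)
    · exact ⟨subset_convexHull ℝ _ hf, hℓf⟩
    · exact ⟨segment_subset_convexHull hf hg (cutPoint_mem_segment hℓf hℓg),
        (map_cutPoint (by linarith)).ge⟩

/-- Applied with `Φ` = coordinate functionals ∪ cutting functionals, so that rational
coordinates and rational values of the later cuts are tracked together. -/
def IsRatPoint (Φ : Set (E →ₗ[ℝ] ℝ)) (x : E) : Prop := ∀ φ ∈ Φ, ∃ q : ℚ, φ x = q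

namespace IsRatPoint

variable {Φ : Set (E →ₗ[ℝ] ℝ)} {x y : E}

theorem smul_add_one_sub_smul (hx : IsRatPoint Φ x) (hy : IsRatPoint Φ y) (t : ℚ) :
    IsRatPoint Φ ((t : ℝ) • x + (1 - (t : ℝ)) • y) := fun φ hφ => by
  obtain ⟨q, hq⟩ := hx φ hφ
  obtain ⟨q', hq'⟩ := hy φ hφ
  exact ⟨t * q + (1 - t) * q', by simp [hq, hq']⟩

theorem cutPoint (hℓ : ℓ ∈ Φ) (hx : IsRatPoint Φ x) (hy : IsRatPoint Φ y) :
    IsRatPoint Φ (cutPoint ℓ x y) := by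
  obtain ⟨q, hq⟩ := hx ℓ hℓ
  obtain ⟨q', hq'⟩ := hy ℓ hℓ
  simpa [_root_.cutPoint, hq, hq'] using hx.smul_add_one_sub_smul hy (q' / (q' - q))

end IsRatPoint

theorem exists_isRatPoint_convexHull_eq_sep_nonneg {Φ : Set (E →ₗ[ℝ] ℝ)} (hℓ : ℓ ∈ Φ)
    (F : Finset E) (hF : ∀ f ∈ F, IsRatPoint Φ f) :
    ∃ G : Finset E, (∀ g ∈ G, IsRatPoint Φ g) ∧
      {x ∈ convexHull ℝ (F : Set E) | 0 ≤ ℓ x} = convexHull ℝ (G : Set E) := by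
  have hfin := (F.finite_toSet.sep (0 ≤ ℓ ·)).union
    ((F.finite_toSet.sep (0 ≤ ℓ ·)).image2 (cutPoint ℓ) (F.finite_toSet.sep (ℓ · < 0)))
  refine ⟨hfin.toFinset, ?_, by rw [hfin.coe_toFinset, convexHull_sep_nonneg_eq]⟩
  simp only [Set.Finite.mem_toFinset]
  rintro _ (⟨hf, -⟩ | ⟨f, ⟨hf, -⟩, g, ⟨hg, -⟩, rfl⟩)
  · exact hF _ hf
  · exact (hF f hf).cutPoint hℓ (hF g hg)

theorem exists_isRatPoint_convexHull_eq_sep_forall_nonneg {Φ : Set (E →ₗ[ℝ] ℝ)}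
    (S : Finset (E →ₗ[ℝ] ℝ)) (hS : ↑S ⊆ Φ) (F : Finset E) (hF : ∀ f ∈ F, IsRatPoint Φ f) :
    ∃ G : Finset E, (∀ g ∈ G, IsRatPoint Φ g) ∧
      {x ∈ convexHull ℝ (F : Set E) | ∀ ℓ ∈ S, 0 ≤ ℓ x} = convexHull ℝ (G : Set E) := by
  classical
  induction S using Finset.induction_on generalizing F with
  | empty => exact ⟨F, hF, by simp⟩
  | insert ℓ S _ ih =>
    rw [Finset.coe_insert, insert_subset_iff] at hS
    obtain ⟨G₁, hG₁, hFG₁⟩ := exists_isRatPoint_convexHull_eq_sep_nonneg hS.1 F hF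
    obtain ⟨G, hG, hG₁G⟩ := ih hS.2 G₁ hG₁
    refine ⟨G, hG, ?_⟩
    rw [← hG₁G, ← hFG₁]
    ext x
    simp [and_assoc]

end Convex

theorem stmt_3_general (N r : ℕ)
    (B : Fin r → EuclideanSpace ℝ (Fin N))
    (hB : ∀ j i, ∃ q : ℚ, B j i = (q : ℝ))
    (m : ℕ) (hm : 0 < m) (c : ℝ)
    (T : Set (EuclideanSpace ℝ (Fin N) →ₗ[ℝ] ℝ))
    (hT : ∀ ℓ ∈ T, ∀ j, (∃ n : ℤ, ℓ (B j) = (n : ℝ) / m) ∧ -c ≤ ℓ (B j)) :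
    ∃ s : Finset (EuclideanSpace ℝ (Fin N)),
      (∀ v ∈ s, ∀ i, ∃ q : ℚ, v i = (q : ℝ)) ∧
      {Δ ∈ convexHull ℝ (Set.range B) | ∀ ℓ ∈ T, 0 ≤ ℓ Δ}
        = convexHull ℝ (s : Set (EuclideanSpace ℝ (Fin N))) := by
  have hpwo : ((fun ℓ : EuclideanSpace ℝ (Fin N) →ₗ[ℝ] ℝ => fun j => ℓ (B j)) '' T).IsPWO :=
    (IsPWO.pi fun _ => isPWO_setOf_int_div_and_le m hm c).mono <| by
      rintro _ ⟨ℓ, hℓ, rfl⟩ j -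
      exact hT ℓ hℓ j
  obtain ⟨T', hT'T, hT'fin, hdom⟩ := hpwo.exists_finite_subset_forall_exists_le
  set Φ := range (EuclideanSpace.projₗ (𝕜 := ℝ)) ∪ T'
  have hBΦ : ∀ f ∈ Finset.univ.image B, IsRatPoint Φ f := by
    simp only [Finset.mem_image, Finset.mem_univ, true_and, forall_exists_index,
      forall_apply_eq_imp_iff]
    rintro j φ (⟨i, rfl⟩ | hφ)
    · exact hB j i
    · obtain ⟨n, hn⟩ := (hT φ (hT'T hφ) j).1
      exact ⟨n / m, by simp [hn]⟩
  obtain ⟨G, hGΦ, hG⟩ := exists_isRatPoint_convexHull_eq_sep_forall_nonneg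
    hT'fin.toFinset (by simp [Φ]) (Finset.univ.image B) hBΦ
  refine ⟨G, fun v hv i => hGΦ v hv _ (Or.inl ⟨i, rfl⟩), ?_⟩
  have hdom' : ∀ ℓ ∈ T, ∃ ℓ' ∈ T', ∀ y ∈ range B, ℓ' y ≤ ℓ y := fun ℓ hℓ => by
    obtain ⟨ℓ', hℓ', hle⟩ := hdom ℓ hℓ
    exact ⟨ℓ', hℓ', forall_mem_range.2 hle⟩
  rw [← hG, Finset.coe_image, Finset.coe_univ, image_univ,
    sep_convexHull_forall_nonneg_eq_of_exists_le hT'T hdom']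
  simp only [Set.Finite.mem_toFinset]

/-- Given rational points `B₁, …, B_r ∈ ℝ^N` with convex hull `L`, a positive
integer `m`, a real `c > 0`, and a set `T` of linear functionals with `ℓ (B j) ∈ (1/m)ℤ`
and `ℓ (B j) ≥ -c` for all `ℓ ∈ T` and all `j`, the set
`N_T = {Δ ∈ L | ℓ Δ ≥ 0 for all ℓ ∈ T}` is a rational polytope, i.e. the convex hull of
finitely many points with rational coordinates. -/
theorem stmt_3 (N r : ℕ) (hN : 0 < N) (hr : 0 < r)
    (B : Fin r → EuclideanSpace ℝ (Fin N))
    (hB : ∀ j i, ∃ q : ℚ, B j i = (q : ℝ))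
    (m : ℕ) (hm : 0 < m) (c : ℝ) (hc : 0 < c)
    (T : Set (EuclideanSpace ℝ (Fin N) →ₗ[ℝ] ℝ))
    (hT : ∀ ℓ ∈ T, ∀ j, (∃ n : ℤ, ℓ (B j) = (n : ℝ) / m) ∧ -c ≤ ℓ (B j)) :
    ∃ s : Finset (EuclideanSpace ℝ (Fin N)),
      (∀ v ∈ s, ∀ i, ∃ q : ℚ, v i = (q : ℝ)) ∧
      {Δ ∈ convexHull ℝ (Set.range B) | ∀ ℓ ∈ T, 0 ≤ ℓ Δ}
        = convexHull ℝ (s : Set (EuclideanSpace ℝ (Fin N))) :=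
  stmt_3_general N r B hB m hm c T hT
end

section
/- Let N and r be positive integers, let B_1, …, B_r be points of ℝ^N with rational coordinates, let L be the convex hull of {B_1, …, B_r}, let m be a positive integer, and let c > 0 be a real number. Let T be a set of linear functionals ℓ : ℝ^N → ℝ such that for every ℓ ∈ T and every j one has ℓ(B_j) ∈ (1/m)ℤ and ℓ(B_j) ≥ −c. Then there exists a finite subset T' ⊆ T such that { Δ ∈ L : ℓ(Δ) ≥ 0 for all ℓ ∈ T } = { Δ ∈ L : ℓ(Δ) ≥ 0 for all ℓ ∈ T' }. -/
/-!
The vectors `(ℓ (B j))ⱼ`, `ℓ ∈ T`, have coordinates in `(1/m)ℤ ∩ [-c, ∞)`, which lies in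
the image of `ℕ` under a monotone map, so by Dickson's lemma they form a partially well-ordered
subset of `ℝ^r`.
Its finitely many minimal elements give a finite `T' ⊆ T` such that every `ℓ ∈ T` dominates some
`ℓ' ∈ T'` at all vertices `B j`, hence on their convex hull `L`; so `ℓ' ≥ 0` on `Δ ∈ L`
forces `ℓ Δ ≥ 0`.
-/

open Set

namespace Set

theorem IsPWO.exists_finite_subset_forall_exists_le_s4 {α : Type*} [PartialOrder α] {s : Set α}
    (hs : s.IsPWO) : ∃ t ⊆ s, t.Finite ∧ ∀ x ∈ s, ∃ y ∈ t, y ≤ x :=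
  ⟨{x | Minimal (· ∈ s) x}, fun _ hx => hx.prop,
    (setOfPred_minimal_antichain _).finite_of_partiallyWellOrderedOn
      (hs.mono fun _ hx => hx.prop),
    fun _ hx => (hs.exists_le_minimal hx).imp fun _ ⟨hle, hmin⟩ => ⟨hmin, hle⟩⟩

theorem IsPWO.exists_finite_subset_forall_exists_map_le {ι α : Type*} [PartialOrder α]
    (f : ι → α) {s : Set ι} (hs : (f '' s).IsPWO) :
    ∃ t ⊆ s, t.Finite ∧ ∀ i ∈ s, ∃ j ∈ t, f j ≤ f i := by
  obtain ⟨t, hts, htfin, hdom⟩ := exists_subset_image_finite_and.mp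
    hs.exists_finite_subset_forall_exists_le_s4
  refine ⟨t, hts, htfin, fun i hi => ?_⟩
  obtain ⟨_, ⟨j, hj, rfl⟩, hle⟩ := hdom (f i) (mem_image_of_mem f hi)
  exact ⟨j, hj, hle⟩

end Set

theorem exists_nat_eq_sub_ceil_div {m : ℕ} (hm : 0 < m) {c x : ℝ} (hx : ∃ n : ℤ, x = n / m)
    (hcx : -c ≤ x) : ∃ k : ℕ, x = ((k : ℝ) - ⌈m * c⌉₊) / m := by
  obtain ⟨n, rfl⟩ := hx
  have hm' : (0 : ℝ) < m := Nat.cast_pos.mpr hm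
  have hnK : 0 ≤ n + ⌈m * c⌉₊ := by
    rw [le_div_iff₀ hm'] at hcx
    have : (0 : ℝ) ≤ n + ⌈m * c⌉₊ := by linarith [Nat.le_ceil (m * c)]
    exact_mod_cast this
  refine ⟨(n + ⌈m * c⌉₊).toNat, ?_⟩
  rw [show (((n + ⌈m * c⌉₊).toNat : ℕ) : ℝ) = ((n + ⌈m * c⌉₊ : ℤ) : ℝ) by
    exact_mod_cast Int.toNat_of_nonneg hnK]
  push_cast
  ring

theorem isPWO_setOf_intCast_div_ge {m : ℕ} (hm : 0 < m) (c : ℝ) :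
    {x : ℝ | (∃ n : ℤ, x = n / m) ∧ -c ≤ x}.IsPWO := by
  have hmono : Monotone fun k : ℕ => ((k : ℝ) - ⌈m * c⌉₊) / m := fun a b hab => by
    dsimp only
    gcongr
  refine ((isPWO_of_wellQuasiOrderedLE univ).image_of_monotone hmono).mono ?_
  rintro x ⟨hx, hcx⟩
  obtain ⟨k, rfl⟩ := exists_nat_eq_sub_ceil_div hm hx hcx
  exact mem_image_of_mem _ (mem_univ k)

theorem LinearMap.le_of_mem_convexHull {𝕜 E : Type*} [Field 𝕜] [LinearOrder 𝕜]
    [IsStrictOrderedRing 𝕜] [AddCommGroup E] [Module 𝕜 E] {f g : E →ₗ[𝕜] 𝕜} {s : Set E}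
    (h : ∀ x ∈ s, f x ≤ g x) {x : E} (hx : x ∈ convexHull 𝕜 s) : f x ≤ g x := by
  have hsub : convexHull 𝕜 s ⊆ {y | 0 ≤ (g - f) y} :=
    convexHull_min (fun y hy => sub_nonneg.mpr (h y hy)) (convex_halfSpace_ge (g - f).isLinear 0)
  exact sub_nonneg.mp (hsub hx)

theorem stmt_4_general (N r : ℕ)
    (B : Fin r → EuclideanSpace ℝ (Fin N))
    (m : ℕ) (hm : 0 < m) (c : ℝ)
    (T : Set (EuclideanSpace ℝ (Fin N) →ₗ[ℝ] ℝ))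
    (hT : ∀ ℓ ∈ T, ∀ j, (∃ n : ℤ, ℓ (B j) = (n : ℝ) / m) ∧ -c ≤ ℓ (B j)) :
    ∃ T' ⊆ T, T'.Finite ∧
      {Δ ∈ convexHull ℝ (Set.range B) | ∀ ℓ ∈ T, 0 ≤ ℓ Δ}
        = {Δ ∈ convexHull ℝ (Set.range B) | ∀ ℓ ∈ T', 0 ≤ ℓ Δ} := by
  have hPWO : ((fun ℓ j => ℓ (B j)) '' T).IsPWO :=
    (IsPWO.pi fun _ => isPWO_setOf_intCast_div_ge hm c).mono <| by
      rintro _ ⟨ℓ, hℓ, rfl⟩ j -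
      exact hT ℓ hℓ j
  obtain ⟨T', hT'T, hT'fin, hdom⟩ := hPWO.exists_finite_subset_forall_exists_map_le
  refine ⟨T', hT'T, hT'fin, Set.ext fun Δ => ⟨fun ⟨hΔ, hpos⟩ => ⟨hΔ, fun ℓ hℓ => hpos ℓ (hT'T hℓ)⟩,
    fun ⟨hΔ, hpos⟩ => ⟨hΔ, fun ℓ hℓ => ?_⟩⟩⟩
  obtain ⟨ℓ', hℓ', hle⟩ := hdom ℓ hℓ
  exact (hpos ℓ' hℓ').trans <| LinearMap.le_of_mem_convexHull (by rintro _ ⟨j, rfl⟩; exact hle j) hΔ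

/-- Given rational points `B₁, …, B_r ∈ ℝ^N` with convex hull `L`, a positive
integer `m`, a real `c > 0`, and a set `T` of linear functionals with `ℓ (B j) ∈ (1/m)ℤ`
and `ℓ (B j) ≥ -c` for all `ℓ ∈ T` and all `j`, there is a finite subset `T' ⊆ T` with
`{Δ ∈ L | ∀ ℓ ∈ T, ℓ Δ ≥ 0} = {Δ ∈ L | ∀ ℓ ∈ T', ℓ Δ ≥ 0}`. -/
theorem stmt_4 (N r : ℕ) (hN : 0 < N) (hr : 0 < r)
    (B : Fin r → EuclideanSpace ℝ (Fin N))
    (hB : ∀ j i, ∃ q : ℚ, B j i = (q : ℝ))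
    (m : ℕ) (hm : 0 < m) (c : ℝ) (hc : 0 < c)
    (T : Set (EuclideanSpace ℝ (Fin N) →ₗ[ℝ] ℝ))
    (hT : ∀ ℓ ∈ T, ∀ j, (∃ n : ℤ, ℓ (B j) = (n : ℝ) / m) ∧ -c ≤ ℓ (B j)) :
    ∃ T' ⊆ T, T'.Finite ∧
      {Δ ∈ convexHull ℝ (Set.range B) | ∀ ℓ ∈ T, 0 ≤ ℓ Δ}
        = {Δ ∈ convexHull ℝ (Set.range B) | ∀ ℓ ∈ T', 0 ≤ ℓ Δ} :=
  stmt_4_general N r B m hm c T hT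
end

section
/- Let L ⊆ ℝ^N be a compact convex set, let T be a set of linear functionals ℓ : ℝ^N → ℝ, and let Δ ∈ L be a point such that ℓ(Δ) = 0 for every ℓ ∈ T. Set N_T := { x ∈ L : ℓ(x) ≥ 0 for all ℓ ∈ T }. Then N_T equals the convex hull of the set {Δ} ∪ ( N_T ∩ frontier(L) ), where frontier(L) denotes the topological frontier of L in ℝ^N. -/
/-- Let `L ⊆ ℝ^N` be compact convex, `T` a set of linear functionals, and
`Δ ∈ L` with `ℓ Δ = 0` for every `ℓ ∈ T`. Then
`N_T = {x ∈ L | ∀ ℓ ∈ T, ℓ x ≥ 0}` equals the convex hull of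
`{Δ} ∪ (N_T ∩ frontier L)`. -/
theorem stmt_5 (N : ℕ) (L : Set (EuclideanSpace ℝ (Fin N)))
    (hLc : IsCompact L) (hLconv : Convex ℝ L)
    (T : Set (EuclideanSpace ℝ (Fin N) →ₗ[ℝ] ℝ))
    (Δ : EuclideanSpace ℝ (Fin N)) (hΔL : Δ ∈ L)
    (hΔ : ∀ ℓ ∈ T, ℓ Δ = 0) :
    {x ∈ L | ∀ ℓ ∈ T, 0 ≤ ℓ x}
      = convexHull ℝ ({Δ} ∪ ({x ∈ L | ∀ ℓ ∈ T, 0 ≤ ℓ x} ∩ frontier L)) := by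
  classical
  set S : Set (EuclideanSpace ℝ (Fin N)) := {x ∈ L | ∀ ℓ ∈ T, 0 ≤ ℓ x} with hSdef
  have hΔS : Δ ∈ S := ⟨hΔL, fun ℓ hℓ => (hΔ ℓ hℓ).ge⟩
  have hSconv : Convex ℝ S := by
    intro x hx y hy a b ha hb hab
    refine ⟨hLconv hx.1 hy.1 ha hb hab, fun ℓ hℓ => ?_⟩
    have h1 := hx.2 ℓ hℓ
    have h2 := hy.2 ℓ hℓ
    simp only [map_add, map_smul, smul_eq_mul]
    positivity
  apply Set.Subset.antisymm
  · intro x hx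
    by_cases hxf : x ∈ frontier L
    · exact subset_convexHull ℝ _ (Or.inr ⟨hx, hxf⟩)
    by_cases hxΔ : x = Δ
    · exact subset_convexHull ℝ _ (Or.inl (by simp [hxΔ]))
    set f : ℝ → EuclideanSpace ℝ (Fin N) := fun t => Δ + t • (x - Δ) with hf
    have hfc : Continuous f := by fun_prop
    set A : Set ℝ := f ⁻¹' L with hA
    have h1A : (1 : ℝ) ∈ A := by simp [hA, hf, hx.1]
    have hAclosed : IsClosed A := hLc.isClosed.preimage hfc
    have hxd : 0 < ‖x - Δ‖ := by rwa [norm_pos_iff, sub_ne_zero]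
    have hAbdd : Bornology.IsBounded A := by
      obtain ⟨C, hC⟩ := hLc.isBounded.subset_closedBall 0
      refine (isBounded_iff_forall_norm_le).mpr
        ⟨(C + ‖Δ‖) / ‖x - Δ‖, fun t ht => ?_⟩
      have h1 : ‖f t‖ ≤ C := mem_closedBall_zero_iff.mp (hC ht)
      rw [le_div_iff₀ hxd]
      calc ‖t‖ * ‖x - Δ‖ = ‖f t - Δ‖ := by simp [hf, norm_smul]
        _ ≤ ‖f t‖ + ‖Δ‖ := norm_sub_le _ _
        _ ≤ C + ‖Δ‖ := by linarith
    have hAcompact : IsCompact A :=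
      Metric.isCompact_iff_isClosed_bounded.mpr ⟨hAclosed, hAbdd⟩
    have hAne : A.Nonempty := ⟨1, h1A⟩
    set t₀ := sSup A with ht₀def
    have ht₀A : t₀ ∈ A := hAcompact.sSup_mem hAne
    have ht₀1 : (1 : ℝ) ≤ t₀ := le_csSup hAcompact.bddAbove h1A
    have ht₀pos : (0 : ℝ) < t₀ := lt_of_lt_of_le one_pos ht₀1
    set y := f t₀ with hy
    have hyL : y ∈ L := ht₀A
    have hyfr : y ∈ frontier L := by
      rw [hLc.isClosed.frontier_eq]
      refine ⟨hyL, fun hyint => ?_⟩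
      obtain ⟨ε, hε, hball⟩ := Metric.isOpen_iff.mp isOpen_interior y hyint
      set δ := ε / (2 * ‖x - Δ‖) with hδ
      have hδpos : 0 < δ := by positivity
      have hmem : f (t₀ + δ) ∈ Metric.ball y ε := by
        have hdiff : f (t₀ + δ) - y = δ • (x - Δ) := by
          simp only [hf, hy, add_smul]
          abel
        have hnorm : ‖f (t₀ + δ) - y‖ = δ * ‖x - Δ‖ := by
          rw [hdiff, norm_smul, Real.norm_eq_abs, abs_of_pos hδpos]
        rw [Metric.mem_ball, dist_eq_norm, hnorm, hδ]
        rw [div_mul_eq_mul_div, mul_comm 2 ‖x - Δ‖, ← div_div,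
          mul_div_assoc, div_self hxd.ne']
        linarith
      have hmemL : f (t₀ + δ) ∈ L := interior_subset (hball hmem)
      have hmemA : t₀ + δ ∈ A := hmemL
      have := le_csSup hAcompact.bddAbove hmemA
      linarith
    have hyS : y ∈ S := by
      refine ⟨hyL, fun ℓ hℓ => ?_⟩
      have : ℓ y = t₀ * ℓ x := by
        simp [hy, hf, map_add, map_smul, map_sub, hΔ ℓ hℓ, smul_eq_mul]
      rw [this]
      exact mul_nonneg ht₀pos.le (hx.2 ℓ hℓ)
    have hseg : x ∈ segment ℝ Δ y := by
      have hinv1 : t₀⁻¹ ≤ 1 := by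
        rw [inv_le_one_iff₀]; right; exact ht₀1
      have hinv0 : (0:ℝ) ≤ t₀⁻¹ := by positivity
      refine ⟨1 - t₀⁻¹, t₀⁻¹, by linarith, hinv0, by ring, ?_⟩
      have key : t₀⁻¹ • (t₀ • (x - Δ)) = x - Δ := by
        rw [smul_smul, inv_mul_cancel₀ ht₀pos.ne', one_smul]
      rw [hy, hf]
      simp only [smul_add, key, sub_smul, one_smul]
      abel
    have hΔmem : Δ ∈ ({Δ} ∪ (S ∩ frontier L) : Set (EuclideanSpace ℝ (Fin N))) :=
      Set.mem_union_left _ rfl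
    have hymem : y ∈ ({Δ} ∪ (S ∩ frontier L) : Set (EuclideanSpace ℝ (Fin N))) :=
      Set.mem_union_right _ ⟨hyS, hyfr⟩
    exact (convex_convexHull ℝ ({Δ} ∪ (S ∩ frontier L))).segment_subset
      (subset_convexHull ℝ _ hΔmem)
      (subset_convexHull ℝ _ hymem) hseg
  · refine convexHull_min ?_ hSconv
    rintro z (rfl | hz)
    · exact hΔS
    · exact hz.1
end
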